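/- arXiv:2102.11900 — 2 statements merged into one kernel-verified Lean document; each statement's English description precedes it below -/
import Mathlib

section
/- Let Ω be a finite set and let G ≤ Sym(Ω) be a 2-closed elusive solvable permutation group of fixity f. Then f ≥ 6. -/
variable {Ω : Type*} [Fintype Ω]

/-- The number of fixed points of a permutation. -/
noncomputable def fixedCount (g : Equiv.Perm Ω) : ℕ := Nat.card {x : Ω // g x = x}

/-- `G` has fixity `f`: every non-trivial element fixes at most `f` points,
and some non-trivial element fixes exactly `f` points. -/
def HasFixity (G : Subgroup (Equiv.Perm Ω)) (f : ℕ) : Prop :=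
  (∀ g ∈ G, g ≠ 1 → fixedCount g ≤ f) ∧ ∃ g ∈ G, g ≠ 1 ∧ fixedCount g = f

/-- `G` is transitive on `Ω`. -/
def IsTransitive (G : Subgroup (Equiv.Perm Ω)) : Prop :=
  ∀ α β : Ω, ∃ g ∈ G, g α = β

/-- `G` is elusive: transitive, and it has no fixed-point-free element of prime order. -/
def IsElusive (G : Subgroup (Equiv.Perm Ω)) : Prop :=
  IsTransitive G ∧ ¬ ∃ g ∈ G, (orderOf g).Prime ∧ ∀ x : Ω, g x ≠ x

/-- `G` is 2-closed: any permutation `σ` of `Ω` such that `(σ α, σ β)` lies in the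
`G`-orbit of `(α, β)` for all `α, β` belongs to `G`. -/
def IsTwoClosed (G : Subgroup (Equiv.Perm Ω)) : Prop :=
  ∀ σ : Equiv.Perm Ω, (∀ α β : Ω, ∃ g ∈ G, g α = σ α ∧ g β = σ β) → σ ∈ G

/-!
Since `G` is solvable, it has a nontrivial abelian normal subgroup `N` of prime exponent `p`.
Point stabilizers `N_x` in `N` are constant on `N`-orbits and, as `G` is transitive, no point is
fixed by all of `N`.

If any two stabilizers `N_x`, `N_y` are equal or generate `N`, pick for each stabilizer an element
`c` of `N` outside it. The map `x ↦ c_{N_x} • x` is a fixed-point-free permutation of order `p`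
that agrees on every pair of points with an element of `N`, so it lies in the 2-closed group `G`,
contradicting elusiveness.

Otherwise `N_α < N_α ⊔ N_β < N` for some `α, β`, so `N`-orbits have at least four points. A
fixity of at most `5` then forces orbits of size `4`, `|N_α| = 2` and `|N| = 8`, and every
nontrivial element of `N` fixes exactly one orbit; counting pairs `(n, x)` with `n • x = x` gives
`|Ω| = 28`. An element of order `7` in `G` then fixes a number of points that is `≡ 28 ≡ 0` mod `7`,
positive and at most `5`, which is impossible.
-/

open MulAction Equiv
open scoped IsMulCommutative

theorem Group.IsSolvable.exists_normal_isMulCommutative_ne_bot {K : Type*} [Group K]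
    [Group.IsSolvable K] [Nontrivial K] : ∃ A : Subgroup K, A.Normal ∧ IsMulCommutative A ∧ A ≠ ⊥ := by
  classical
  have hsol : ∃ n, derivedSeries K n = ⊥ := Group.IsSolvable.solvable
  have hpos : Nat.find hsol ≠ 0 := fun h => top_ne_bot (by
    rw [← derivedSeries_zero, ← h]; exact Nat.find_spec hsol)
  refine ⟨derivedSeries K (Nat.find hsol - 1), derivedSeries_normal _ _, ?_,
    Nat.find_min hsol (by omega)⟩
  rw [← Subgroup.commutator_self_eq_bot_iff, ← derivedSeries_succ, Nat.sub_add_cancel (by omega)]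
  exact Nat.find_spec hsol

theorem Subgroup.exists_normal_isMulCommutative_pow_prime_eq_one {K : Type*} [Group K] [Finite K]
    (A : Subgroup K) [A.Normal] [IsMulCommutative A] (hA : A ≠ ⊥) :
    ∃ p, p.Prime ∧
      ∃ N : Subgroup K, N.Normal ∧ IsMulCommutative N ∧ N ≠ ⊥ ∧ ∀ n ∈ N, n ^ p = 1 := by
  obtain ⟨p, hp, hpA⟩ :=
    Nat.exists_prime_and_dvd ((Subgroup.one_lt_card_iff_ne_bot A).mpr hA).ne'
  have : Fact p.Prime := ⟨hp⟩
  obtain ⟨a, ha⟩ := exists_prime_orderOf_dvd_card' p hpA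
  let N : Subgroup K :=
    { carrier := {x | x ∈ A ∧ x ^ p = 1}
      mul_mem' := fun {x y} ⟨hx, hx'⟩ ⟨hy, hy'⟩ => ⟨A.mul_mem hx hy, by
        rw [Commute.mul_pow (setLike_mul_comm hx hy), hx', hy', one_mul]⟩
      one_mem' := ⟨A.one_mem, one_pow p⟩
      inv_mem' := fun {x} ⟨hx, hx'⟩ => ⟨A.inv_mem hx, by rw [inv_pow, hx', inv_one]⟩ }
  have hN_normal : N.Normal := ⟨fun x ⟨hx, hx'⟩ g =>
    ⟨‹A.Normal›.conj_mem x hx g, by rw [conj_pow, hx', mul_one, mul_inv_cancel]⟩⟩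
  have hN_comm : IsMulCommutative N := ⟨⟨fun x y => Subtype.ext (setLike_mul_comm x.2.1 y.2.1)⟩⟩
  have haN : (a : K) ∈ N :=
    ⟨a.2, by rw [← Subgroup.coe_pow, ← ha, pow_orderOf_eq_one, Subgroup.coe_one]⟩
  have ha1 : (a : K) ≠ 1 := fun h =>
    hp.ne_one (by rw [← ha, show a = 1 from Subtype.ext h, orderOf_one])
  exact ⟨p, hp, N, hN_normal, hN_comm, (Subgroup.ne_bot_iff_exists_ne_one).mpr
    ⟨⟨a, haN⟩, fun h => ha1 (Subtype.ext_iff.mp h)⟩, fun x hx => hx.2⟩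

namespace MulAction

section Normal

variable {K X : Type*} [Group K] [MulAction K X] [IsPretransitive K X]

theorem ncard_orbit_eq_of_normal (N : Subgroup K) [N.Normal] (x y : X) :
    (orbit N x).ncard = (orbit N y).ncard := by
  obtain ⟨g, rfl⟩ := exists_smul_eq K x y
  rw [← smul_orbit_eq_orbit_smul, Set.ncard_smul_set]

theorem stabilizer_ne_top_of_normal [FaithfulSMul K X] {N : Subgroup K} [N.Normal] (hN : N ≠ ⊥)
    (x : X) : stabilizer N x ≠ ⊤ := by
  intro htop
  refine hN ((Subgroup.eq_bot_iff_forall N).mpr fun n hn =>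
    eq_of_smul_eq_smul (α := X) fun y => ?_)
  obtain ⟨g, rfl⟩ := exists_smul_eq K x y
  have hconj : g⁻¹ * n * g ∈ N := by simpa using ‹N.Normal›.conj_mem n hn g⁻¹
  have hfix : (⟨_, hconj⟩ : N) ∈ stabilizer N x := htop ▸ Subgroup.mem_top _
  replace hfix : (g⁻¹ * n * g) • x = x := hfix
  calc n • g • x = g • (g⁻¹ * n * g) • x := by simp only [mul_smul, smul_inv_smul]
    _ = (1 : K) • g • x := by rw [hfix, one_smul]

end Normal

variable {A X : Type*} [Group A] [MulAction A X]

theorem sum_card_stabilizer_eq_sum_ncard_fixedBy [Fintype A] [Fintype X] :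
    ∑ x : X, Nat.card (stabilizer A x) = ∑ a : A, (fixedBy X a).ncard := by
  classical
  simp only [← Nat.card_coe_set_eq, Nat.card_eq_fintype_card, Fintype.card_subtype,
    Finset.card_filter]
  exact Finset.sum_comm

theorem card_stabilizer_mul_card_add_eq [Finite A] [Finite X] {s m : ℕ}
    (hs : ∀ x : X, Nat.card (stabilizer A x) = s)
    (hm : ∀ a : A, a ≠ 1 → (fixedBy X a).ncard = m) :
    s * Nat.card X + m = Nat.card X + m * Nat.card A := by
  classical
  have := Fintype.ofFinite A
  have := Fintype.ofFinite X
  have hsum := sum_card_stabilizer_eq_sum_ncard_fixedBy (A := A) (X := X)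
  rw [Fintype.sum_eq_add_sum_compl (1 : A),
    Finset.sum_congr rfl fun a ha => hm a (by simpa using ha),
    Finset.sum_congr rfl fun x _ => hs x] at hsum
  simp only [Finset.sum_const, Finset.card_univ, smul_eq_mul, fixedBy_one_eq_univ, Set.ncard_univ,
    Finset.card_compl, Finset.card_singleton, Nat.card_eq_fintype_card] at hsum ⊢
  have hA : 1 ≤ Fintype.card A := Fintype.card_pos
  zify [hA] at hsum ⊢
  linarith

variable [IsMulCommutative A]

theorem stabilizer_eq_of_mem_orbit {x y : X} (h : y ∈ orbit A x) :
    stabilizer A y = stabilizer A x := by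
  obtain ⟨a, rfl⟩ := h
  exact stabilizer_smul_eq_right a x

theorem orbit_subset_fixedBy {a : A} {x : X} (ha : a ∈ stabilizer A x) :
    orbit A x ⊆ fixedBy X a := by
  rintro _ ⟨b, rfl⟩
  rw [mem_fixedBy, smul_comm, mem_stabilizer_iff.mp ha]

theorem exists_perm_fixedPointFree_of_stabilizer_eq_or_sup_eq_top [Finite X] {n : ℕ}
    (hexp : ∀ a : A, a ^ n = 1) (hmove : ∀ x : X, stabilizer A x ≠ ⊤)
    (hstab : ∀ x y : X, stabilizer A x = stabilizer A y ∨ stabilizer A x ⊔ stabilizer A y = ⊤) :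
    ∃ σ : Perm X, (∀ x, σ x ≠ x) ∧ σ ^ n = 1 ∧
      ∀ x y, ∃ a : A, a • x = σ x ∧ a • y = σ y := by
  obtain ⟨c, hc⟩ : ∃ c : Subgroup A → A, ∀ x : X, c (stabilizer A x) ∉ stabilizer A x := by
    have (S : Subgroup A) : ∃ a : A, S ≠ ⊤ → a ∉ S := by
      by_cases hS : S = ⊤
      · exact ⟨1, fun h => (h hS).elim⟩
      · exact (SetLike.exists_not_mem_of_ne_top S hS).imp fun _ ha _ => ha
    choose c hc using this
    exact ⟨c, fun x => hc _ (hmove x)⟩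
  set f : X → X := fun x => c (stabilizer A x) • x
  have hf_stab (x : X) : stabilizer A (f x) = stabilizer A x := stabilizer_smul_eq_right _ x
  have hf_inj : f.Injective := by
    intro x y hxy
    have hx : x ∈ orbit A y := ⟨(c (stabilizer A x))⁻¹ * c (stabilizer A y), by
      show _ • y = x
      rw [mul_smul]; exact inv_smul_eq_iff.mpr hxy.symm⟩
    simp only [f, stabilizer_eq_of_mem_orbit hx] at hxy
    exact smul_left_cancel _ hxy
  set σ := Equiv.ofBijective f (Finite.injective_iff_bijective.mp hf_inj)
  have hσ_pow (k : ℕ) (x : X) : (σ ^ k) x = c (stabilizer A x) ^ k • x := by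
    induction k generalizing x with
    | zero => simp
    | succ k ih =>
      rw [pow_succ, Perm.mul_apply, ih, Equiv.ofBijective_apply, hf_stab, pow_succ, mul_smul]
  refine ⟨σ, fun x hx => hc x hx, ?_, fun x y => ?_⟩
  · ext x
    rw [hσ_pow, hexp, one_smul, Perm.one_apply]
  rcases hstab x y with h | h
  · exact ⟨c (stabilizer A x), rfl, by simp only [σ, f, Equiv.ofBijective_apply, h]⟩
  -- with `c_x := c (stabilizer A x)`, write `c_x⁻¹ c_y = u v` with `u` fixing `x` and `v` fixing
  -- `y`; then `c_x u = c_y v⁻¹` moves `x` like `c_x` and `y` like `c_y`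
  obtain ⟨u, hu, v, hv, huv⟩ :=
    Subgroup.mem_sup.mp (h ▸ Subgroup.mem_top ((c (stabilizer A x))⁻¹ * c (stabilizer A y)))
  have hcu : c (stabilizer A x) * u = c (stabilizer A y) * v⁻¹ := by
    rw [eq_mul_inv_iff_mul_eq, mul_assoc, huv, mul_inv_cancel_left]
  refine ⟨c (stabilizer A x) * u, ?_, ?_⟩
  · rw [mul_smul, mem_stabilizer_iff.mp hu]; rfl
  · rw [hcu, mul_smul, inv_smul_eq_iff.mpr (mem_stabilizer_iff.mp hv).symm]; rfl

theorem ncard_orbit_add_ncard_orbit_le [Finite X] {a : A} {x y : X} (hx : a ∈ stabilizer A x)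
    (hy : a ∈ stabilizer A y) (hxy : orbit A x ≠ orbit A y) :
    (orbit A x).ncard + (orbit A y).ncard ≤ (fixedBy X a).ncard := by
  have hdisj : Disjoint (orbit A x) (orbit A y) := (orbit.eq_or_disjoint x y).resolve_left hxy
  rw [← Set.ncard_union_eq hdisj]
  exact Set.ncard_le_ncard (Set.union_subset (orbit_subset_fixedBy hx) (orbit_subset_fixedBy hy))

theorem index_stabilizer_eq_four_of_sup_ne_top [Finite A] [Finite X]
    (horbit : ∀ x y : X, (orbit A x).ncard = (orbit A y).ncard)
    (hfix : ∀ a : A, a ≠ 1 → (fixedBy X a).ncard ≤ 5) {α β : X}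
    (hne : stabilizer A α ≠ stabilizer A β) (hsup : stabilizer A α ⊔ stabilizer A β ≠ ⊤) :
    (stabilizer A α).index = 4 ∧ (stabilizer A α).relIndex (stabilizer A β) = 2 := by
  set H := stabilizer A α
  set K := stabilizer A β
  have hindex : H.index = K.index := by simp only [H, K, index_stabilizer, horbit α β]
  have hcard : Nat.card H = Nat.card K := by
    have := H.index_mul_card.trans K.index_mul_card.symm
    rwa [hindex, Nat.mul_right_inj (Subgroup.index_ne_zero_of_finite)] at this
  have hKH : ¬ K ≤ H := fun h => hne (Subgroup.eq_of_le_of_card_ge h hcard.le).symm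
  obtain ⟨b, hbK, hbH⟩ := SetLike.not_le_iff_exists.mp hKH
  have hle : H.index ≤ 5 := by
    rw [hindex, index_stabilizer]
    refine (Set.ncard_le_ncard (orbit_subset_fixedBy hbK)).trans (hfix b ?_)
    rintro rfl
    exact hbH H.one_mem
  -- `[A : H] = [H ⊔ K : H] [A : H ⊔ K] ≤ 5` and both factors are at least `2`
  have hmul := Subgroup.relIndex_mul_index (le_sup_left : H ≤ H ⊔ K)
  have hrel : H.relIndex (H ⊔ K) ≠ 1 := fun h =>
    hKH (le_sup_right.trans (Subgroup.relIndex_eq_one.mp h))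
  have htop : (H ⊔ K).index ≠ 1 := fun h => hsup (Subgroup.index_eq_one.mp h)
  have h0 : H.index ≠ 0 := Subgroup.index_ne_zero_of_finite
  rw [Subgroup.relIndex_sup_left] at hmul hrel
  have hr : 2 ≤ H.relIndex K := by
    have : H.relIndex K ≠ 0 := fun h => h0 (by rw [← hmul, h, zero_mul])
    omega
  have ht : 2 ≤ (H ⊔ K).index := by
    have : (H ⊔ K).index ≠ 0 := fun h => h0 (by rw [← hmul, h, mul_zero])
    omega
  have hr2 : H.relIndex K = 2 := by nlinarith
  have ht2 : (H ⊔ K).index = 2 := by nlinarith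
  exact ⟨by rw [← hmul, hr2, ht2], hr2⟩

theorem card_eq_twentyEight_of_sup_ne_top [Finite A] [Finite X]
    (horbit : ∀ x y : X, (orbit A x).ncard = (orbit A y).ncard)
    (hfix : ∀ a : A, a ≠ 1 → (fixedBy X a).Nonempty)
    (hfix5 : ∀ a : A, a ≠ 1 → (fixedBy X a).ncard ≤ 5) {α β : X}
    (hne : stabilizer A α ≠ stabilizer A β) (hsup : stabilizer A α ⊔ stabilizer A β ≠ ⊤) :
    Nat.card X = 28 := by
  obtain ⟨hindex, hrel⟩ := index_stabilizer_eq_four_of_sup_ne_top horbit hfix5 hne hsup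
  have horbit4 (x : X) : (orbit A x).ncard = 4 := by
    rw [horbit x α, ← index_stabilizer, hindex]
  have horbit_eq {a : A} (ha : a ≠ 1) {x y : X} (hx : a ∈ stabilizer A x)
      (hy : a ∈ stabilizer A y) : orbit A x = orbit A y := by
    by_contra hxy
    have := (ncard_orbit_add_ncard_orbit_le hx hy hxy).trans (hfix5 a ha)
    rw [horbit4, horbit4] at this
    omega
  have hinf : stabilizer A α ⊓ stabilizer A β = ⊥ := by
    refine (Subgroup.eq_bot_iff_forall _).mpr fun a ⟨hα, hβ⟩ => ?_
    by_contra ha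
    have hβα : β ∈ orbit A α := horbit_eq ha hα hβ ▸ mem_orbit_self β
    exact hne (stabilizer_eq_of_mem_orbit hβα).symm
  have hβ : Nat.card (stabilizer A β) = 2 := by
    rw [← Subgroup.relIndex_bot_left, ← hinf, Subgroup.inf_relIndex_right, hrel]
  have hA : Nat.card A = 8 := by
    rw [← (stabilizer A β).index_mul_card, hβ, index_stabilizer, horbit4]
  have hstab (x : X) : Nat.card (stabilizer A x) = 2 := by
    have := (stabilizer A x).index_mul_card
    rw [index_stabilizer, horbit4, hA] at this
    omega
  have hfix4 (a : A) (ha : a ≠ 1) : (fixedBy X a).ncard = 4 := by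
    obtain ⟨x, hx⟩ := hfix a ha
    have : fixedBy X a = orbit A x := by
      refine Set.Subset.antisymm (fun y hy => ?_) (orbit_subset_fixedBy hx)
      exact horbit_eq ha hx hy ▸ mem_orbit_self y
    rw [this, horbit4]
  have := card_stabilizer_mul_card_add_eq hstab hfix4
  omega

end MulAction

theorem fixedCount_eq_card_compl_support {α : Type*} [Fintype α] [DecidableEq α] (g : Perm α) :
    fixedCount g = g.supportᶜ.card := by
  simp [fixedCount, Nat.card_eq_fintype_card, Fintype.card_subtype, Perm.support,
    Finset.compl_filter]

theorem fixedCount_coe_eq_ncard_fixedBy {α : Type*} {G : Subgroup (Perm α)} (g : G) :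
    fixedCount (g : Perm α) = (fixedBy α g).ncard :=
  Nat.card_coe_set_eq _

theorem IsTransitive.isPretransitive {α : Type*} {G : Subgroup (Perm α)} (h : IsTransitive G) :
    IsPretransitive G α :=
  ⟨fun x y => let ⟨g, hg, hgx⟩ := h x y; ⟨⟨g, hg⟩, hgx⟩⟩

namespace IsElusive

variable {α : Type*} {G : Subgroup (Perm α)}

theorem exists_apply_eq (hel : IsElusive G) {g : Perm α} (hg : g ∈ G) (hp : (orderOf g).Prime) :
    ∃ x, g x = x := by
  by_contra! h
  exact hel.2 ⟨g, hg, hp, h⟩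

theorem fixedBy_nonempty (hel : IsElusive G) {p : ℕ} (hp : p.Prime) {N : Subgroup G}
    (hexp : ∀ n ∈ N, n ^ p = 1) {n : N} (hn : n ≠ 1) : (fixedBy α n).Nonempty := by
  have : Fact p.Prime := ⟨hp⟩
  have hord : orderOf ((n : G) : Perm α) = p := by
    rw [Subgroup.orderOf_coe, Subgroup.orderOf_coe]
    exact orderOf_eq_prime (Subtype.ext (by simpa using hexp n n.2)) hn
  exact hel.exists_apply_eq (n : G).2 (hord ▸ hp)

theorem le_of_prime_dvd_card [Fintype α] [Nonempty α] (hel : IsElusive G) {f q : ℕ}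
    (hfix : ∀ g ∈ G, g ≠ 1 → fixedCount g ≤ f) (hq : q.Prime) (hdvd : q ∣ Fintype.card α) :
    q ≤ f := by
  classical
  have : Fact q.Prime := ⟨hq⟩
  have := hel.1.isPretransitive
  have hG : q ∣ Nat.card G := by
    rw [Fintype.card_eq_nat_card,
      ← index_stabilizer_of_transitive G (Classical.arbitrary α)] at hdvd
    exact hdvd.trans (Subgroup.index_dvd_card _)
  obtain ⟨g, hg⟩ := exists_prime_orderOf_dvd_card' q hG
  rw [← Subgroup.orderOf_coe] at hg
  obtain ⟨x, hx⟩ := hel.exists_apply_eq g.2 (hg ▸ hq)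
  have hmod := Perm.card_compl_support_modEq (σ := (g : Perm α)) (p := q) (n := 1)
    (by rw [pow_one, ← hg, pow_orderOf_eq_one])
  rw [← fixedCount_eq_card_compl_support] at hmod
  have hpos : fixedCount (g : Perm α) ≠ 0 := by
    rw [fixedCount, Nat.card_ne_zero]
    exact ⟨⟨⟨x, hx⟩⟩, inferInstance⟩
  have hg1 : (g : Perm α) ≠ 1 := fun h => hq.ne_one (by rw [← hg, h, orderOf_one])
  have hq_dvd : q ∣ fixedCount (g : Perm α) :=
    Nat.modEq_zero_iff_dvd.mp (hmod.trans (Nat.modEq_zero_iff_dvd.mpr hdvd))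
  exact (Nat.le_of_dvd (Nat.pos_of_ne_zero hpos) hq_dvd).trans (hfix g g.2 hg1)

end IsElusive

theorem IsTwoClosed.exists_stabilizer_ne_and_sup_ne_top {α : Type*} [Finite α] [Nonempty α]
    {G : Subgroup (Perm α)} (h2c : IsTwoClosed G) (hel : IsElusive G) {p : ℕ} (hp : p.Prime)
    {N : Subgroup G} [N.Normal] [IsMulCommutative N] (hN : N ≠ ⊥) (hexp : ∀ n ∈ N, n ^ p = 1) :
    ∃ x y : α, stabilizer N x ≠ stabilizer N y ∧ stabilizer N x ⊔ stabilizer N y ≠ ⊤ := by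
  by_contra! hstab
  have := hel.1.isPretransitive
  obtain ⟨σ, hσ_fpf, hσ_pow, hσ_mem⟩ := exists_perm_fixedPointFree_of_stabilizer_eq_or_sup_eq_top
    (A := N) (n := p) (fun n => Subtype.ext (hexp n n.2)) (stabilizer_ne_top_of_normal hN)
    (fun x y => or_iff_not_imp_left.mpr (hstab x y))
  have hσG : σ ∈ G := h2c σ fun x y =>
    let ⟨n, hx, hy⟩ := hσ_mem x y; ⟨n, (n : G).2, hx, hy⟩
  have : Fact p.Prime := ⟨hp⟩
  have hσ1 : σ ≠ 1 := fun h => hσ_fpf (Classical.arbitrary α) (by rw [h]; rfl)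
  exact hel.2 ⟨σ, hσG, (orderOf_eq_prime hσ_pow hσ1).symm ▸ hp, hσ_fpf⟩

/-- a 2-closed elusive solvable group of fixity `f` satisfies `f ≥ 6`. -/
theorem stmt_13 (G : Subgroup (Equiv.Perm Ω)) (f : ℕ) (h2c : IsTwoClosed G)
    (hel : IsElusive G) (hsol : IsSolvable ↥G) (hfix : HasFixity G f) :
    6 ≤ f := by
  obtain ⟨hbound, g₀, hg₀G, hg₀, -⟩ := hfix
  by_contra! hf
  have : Nontrivial G := nontrivial_of_ne ⟨g₀, hg₀G⟩ 1 fun h => hg₀ (congrArg Subtype.val h)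
  have : Nonempty Ω := by
    obtain ⟨x, -⟩ := not_forall.mp fun h => hg₀ (Equiv.ext h)
    exact ⟨x⟩
  have := hel.1.isPretransitive
  have : Group.IsSolvable G := hsol
  obtain ⟨A, hAn, hAc, hA⟩ := Group.IsSolvable.exists_normal_isMulCommutative_ne_bot (K := G)
  obtain ⟨p, hp, N, hNn, hNc, hN, hexp⟩ := A.exists_normal_isMulCommutative_pow_prime_eq_one hA
  obtain ⟨x, y, hne, hsup⟩ := h2c.exists_stabilizer_ne_and_sup_ne_top hel hp hN hexp
  have hfix5 (n : N) (hn : n ≠ 1) : (fixedBy Ω n).ncard ≤ 5 := by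
    have hn' : ((n : G) : Perm Ω) ≠ 1 := fun h => hn (Subtype.ext (Subtype.ext h))
    exact (fixedCount_coe_eq_ncard_fixedBy (n : G) ▸ hbound _ (n : G).2 hn').trans (by omega)
  have h28 : Nat.card Ω = 28 := card_eq_twentyEight_of_sup_ne_top (ncard_orbit_eq_of_normal N)
    (fun n hn => hel.fixedBy_nonempty hp hexp hn) hfix5 hne hsup
  have h7 := hel.le_of_prime_dvd_card hbound (by norm_num : Nat.Prime 7)
    (by rw [Fintype.card_eq_nat_card, h28]; norm_num)
  omega
end

section
/- Let Ω be a finite set, let G ≤ Sym(Ω) be an elusive permutation group, and let N be a non-trivial abelian normal subgroup of G. Then |N| is not squarefree; in particular |N| is not a prime. -/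
/-!
If `|N|` were squarefree, a Sylow `p`-subgroup of the abelian group `N` would have order `p` and be
characteristic in `N`, hence normal in `G`; so it is `⟨x⟩` for some `x` of order `p` all of whose
conjugates are powers of `x`. Elusiveness gives `x` a fixed point `a`, and as `G` is transitive, every
point `g • a` is then fixed by `x` (because `g⁻¹ x g` is a power of `x`), forcing `x = 1`.
-/

variable {Ω : Type*} [Fintype Ω]

theorem MulAction.smul_eq_self_of_zpowers_normal {G α : Type*} [Group G] [MulAction G α]
    [MulAction.IsPretransitive G α] {x : G} (hx : (Subgroup.zpowers x).Normal) {a : α}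
    (ha : x • a = a) (b : α) : x • b = b := by
  obtain ⟨g, rfl⟩ := MulAction.exists_smul_eq G a b
  obtain ⟨k, hk⟩ := hx.conj_mem x (Subgroup.mem_zpowers x) g⁻¹
  have hxk : x ^ k ∈ MulAction.stabilizer G a :=
    Subgroup.zpow_mem _ (MulAction.mem_stabilizer_iff.mpr ha) k
  rwa [show x ^ k = g⁻¹ * x * g by simpa using hk, MulAction.mem_stabilizer_iff, mul_smul,
    mul_smul, inv_smul_eq_iff] at hxk

theorem Subgroup.exists_normal_card_eq_prime_of_squarefree {G : Type*} [Group G] (N : Subgroup G)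
    [N.Normal] [IsMulCommutative N] (hN : Squarefree (Nat.card N)) {p : ℕ} [hp : Fact p.Prime]
    (hpN : p ∣ Nat.card N) : ∃ K : Subgroup G, K.Normal ∧ Nat.card K = p := by
  have : Finite N := Nat.finite_of_card_ne_zero hN.ne_zero
  let P : Sylow p N := default
  have := P.characteristic_of_normal (normal_of_isMulCommutative _)
  refine ⟨P.1.map N.subtype, inferInstance, ?_⟩
  rw [card_map_of_injective N.subtype_injective, P.card_eq_multiplicity,
    le_antisymm (hN.natFactorization_le_one p)
      ((hp.out.dvd_iff_one_le_factorization Nat.card_pos.ne').mp hpN), pow_one]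

theorem Subgroup.exists_zpowers_eq_of_card_eq_prime {G : Type*} [Group G] {K : Subgroup G}
    {p : ℕ} [hp : Fact p.Prime] (hK : Nat.card K = p) : ∃ x : G, orderOf x = p ∧ zpowers x = K := by
  have : Finite K := Nat.finite_of_card_ne_zero (hK ▸ hp.out.ne_zero)
  obtain ⟨y, hy⟩ := exists_prime_orderOf_dvd_card' (G := K) p hK.symm.dvd
  rw [← Subgroup.orderOf_coe] at hy
  exact ⟨y, hy, eq_of_le_of_card_ge (zpowers_le.mpr y.2) (by rw [Nat.card_zpowers, hy, hK])⟩

theorem IsTransitive.isPretransitive_s14 {X : Type*} {G : Subgroup (Equiv.Perm X)}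
    (hG : IsTransitive G) : MulAction.IsPretransitive G X :=
  ⟨fun a b => by
    obtain ⟨g, hg, hab⟩ := hG a b
    exact ⟨⟨g, hg⟩, hab⟩⟩

/-- the order of a non-trivial abelian normal subgroup of an elusive
group is not squarefree; in particular it is not a prime. -/
theorem stmt_14 (G : Subgroup (Equiv.Perm Ω)) (hel : IsElusive G)
    (N : Subgroup ↥G) (hNnormal : N.Normal) (hNbot : N ≠ ⊥)
    (hNab : ∀ a b : ↥N, a * b = b * a) :
    ¬ Squarefree (Nat.card ↥N) ∧ ¬ (Nat.card ↥N).Prime := by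
  suffices hsf : ¬ Squarefree (Nat.card ↥N) from ⟨hsf, fun hpr => hsf hpr.squarefree⟩
  intro hsf
  obtain ⟨p, hp, hpN⟩ := Nat.exists_prime_and_dvd (N.one_lt_card_iff_ne_bot.mpr hNbot).ne'
  have : Fact p.Prime := ⟨hp⟩
  have : IsMulCommutative N := ⟨⟨hNab⟩⟩
  obtain ⟨K, hK, hKp⟩ := N.exists_normal_card_eq_prime_of_squarefree hsf hpN
  obtain ⟨x, hxp, rfl⟩ := Subgroup.exists_zpowers_eq_of_card_eq_prime hKp
  have := hel.1.isPretransitive_s14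
  obtain ⟨a, ha⟩ : ∃ a, (x : Equiv.Perm Ω) a = a := by
    by_contra! hfree
    exact hel.2 ⟨x, x.2, by rwa [Subgroup.orderOf_coe, hxp], hfree⟩
  have hx1 : x = 1 := Subtype.ext (Equiv.ext (MulAction.smul_eq_self_of_zpowers_normal hK ha))
  exact hp.one_lt.ne' (by rw [← hxp, hx1, orderOf_one])
end
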